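/- arXiv:1803.05771 — 6 statements merged into one kernel-verified Lean document; each statement's English description precedes it below -/
import Mathlib

section
/- Let θ₀ ∈ (0,1] and define θ_{k+1} = (√(θ_k⁴ + 4θ_k²) − θ_k²)/2. Then for all k ≥ 0, θ_k ≤ 2/(k + 2/θ₀). -/
/-!
Each step makes `θ_{k+1}` the positive root of `X² + θ_k² X - θ_k²`. Evaluating this increasing
polynomial at `2θ_k / (2 + θ_k)` gives `θ_k⁴ / (2 + θ_k)² ≥ 0`, so `θ_{k+1} ≤ 2θ_k / (2 + θ_k)`,
that is `1/θ_{k+1} ≥ 1/θ_k + 1/2`. Summing, `1/θ_k ≥ 1/θ₀ + k/2`.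
-/

noncomputable def nextTheta (a : ℝ) : ℝ := (√(a ^ 4 + 4 * a ^ 2) - a ^ 2) / 2

lemma nextTheta_pos {a : ℝ} (ha : a ≠ 0) : 0 < nextTheta a := by
  have hlt : a ^ 2 < √(a ^ 4 + 4 * a ^ 2) := by
    rw [Real.lt_sqrt (sq_nonneg a)]
    nlinarith [sq_pos_of_ne_zero ha]
  unfold nextTheta
  linarith

lemma nextTheta_sq_add (a : ℝ) : nextTheta a ^ 2 + a ^ 2 * nextTheta a = a ^ 2 := by
  have hs : √(a ^ 4 + 4 * a ^ 2) ^ 2 = a ^ 4 + 4 * a ^ 2 := Real.sq_sqrt (by positivity)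
  unfold nextTheta
  linear_combination hs / 4

lemma inv_add_half_le_inv_nextTheta {a : ℝ} (ha : 0 < a) : a⁻¹ + 2⁻¹ ≤ (nextTheta a)⁻¹ := by
  set b := nextTheta a
  have hb : 0 < b := nextTheta_pos ha.ne'
  have hroot : b ^ 2 + a ^ 2 * b = a ^ 2 := nextTheta_sq_add a
  have hle : b * (2 + a) ≤ 2 * a := by
    nlinarith [mul_pos ha hb]
  calc a⁻¹ + 2⁻¹ = (2 * a / (2 + a))⁻¹ := by field_simp
    _ ≤ b⁻¹ := inv_anti₀ hb ((le_div_iff₀ (by positivity)).2 hle)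

theorem theta_upper_bound (th : ℕ → ℝ)
    (h0 : th 0 ∈ Set.Ioc (0:ℝ) 1)
    (hrec : ∀ k, th (k+1) = (Real.sqrt ((th k)^4 + 4*(th k)^2) - (th k)^2)/2) :
    ∀ k : ℕ, th k ≤ 2 / ((k : ℝ) + 2 / th 0) := by
  have hnext : ∀ k, th (k + 1) = nextTheta (th k) := hrec
  have hpos : ∀ k, 0 < th k := fun k => by
    induction k with
    | zero => exact h0.1
    | succ k ih => exact hnext k ▸ nextTheta_pos ih.ne'
  have hinv : ∀ k : ℕ, (th 0)⁻¹ + k / 2 ≤ (th k)⁻¹ := fun k => by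
    induction k with
    | zero => simp
    | succ k ih =>
      have := inv_add_half_le_inv_nextTheta (hpos k)
      rw [← hnext] at this
      push_cast
      linarith
  intro k
  calc th k = ((th k)⁻¹)⁻¹ := (inv_inv _).symm
    _ ≤ ((th 0)⁻¹ + k / 2)⁻¹ := inv_anti₀ (by have := hpos 0; positivity) (hinv k)
    _ = 2 / ((k : ℝ) + 2 / th 0) := by field_simp; ring
end

section
/- Let θ₀ ∈ (0,1] and define θ_{k+1} = (√(θ_k⁴ + 4θ_k²) − θ_k²)/2. Then for all k ≥ 0, θ_k ≥ (2−θ₀)/(k + (2−θ₀)/θ₀). -/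
/-!
Writing `θ' = thetaStep θ`, the new parameter satisfies `θ'² = θ² (1 - θ')`, so `θ' ≤ θ` and
`θ'/θ = √(1 - θ') ≥ 1 - θ' ≥ 1 - θ₀`. From `θ² - θ'² = θ² θ'` one gets
`1/θ' - 1/θ = 1 / (1 + θ'/θ) ≤ 1 / (2 - θ₀)`, and summing these increments gives the bound.
-/

open Real

noncomputable def thetaStep (x : ℝ) : ℝ := (√(x ^ 4 + 4 * x ^ 2) - x ^ 2) / 2

lemma thetaStep_sq (x : ℝ) : thetaStep x ^ 2 = x ^ 2 * (1 - thetaStep x) := by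
  have hs : √(x ^ 4 + 4 * x ^ 2) ^ 2 = x ^ 4 + 4 * x ^ 2 := sq_sqrt (by positivity)
  unfold thetaStep
  linear_combination hs / 4

lemma thetaStep_pos {x : ℝ} (hx : x ≠ 0) : 0 < thetaStep x := by
  have hx2 : 0 < x ^ 2 := by positivity
  have : x ^ 2 < √(x ^ 4 + 4 * x ^ 2) := lt_sqrt_of_sq_lt (by nlinarith)
  unfold thetaStep
  linarith

section StepRelation

variable {x y : ℝ}

lemma lt_one_of_sq_eq_sq_mul_one_sub (hy : 0 < y) (h : y ^ 2 = x ^ 2 * (1 - y)) : y < 1 := by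
  by_contra! hy1
  nlinarith [sq_nonneg x]

lemma le_of_sq_eq_sq_mul_one_sub (hx : 0 ≤ x) (hy : 0 < y) (h : y ^ 2 = x ^ 2 * (1 - y)) :
    y ≤ x :=
  pow_le_pow_iff_left₀ hy.le hx two_ne_zero |>.mp (by nlinarith [sq_nonneg x])

lemma one_sub_mul_le_of_sq_eq_sq_mul_one_sub (hx : 0 ≤ x) (hy : 0 < y)
    (h : y ^ 2 = x ^ 2 * (1 - y)) : (1 - y) * x ≤ y := by
  have hy1 := lt_one_of_sq_eq_sq_mul_one_sub hy h
  have : ((1 - y) * x) ^ 2 ≤ y ^ 2 := by nlinarith [sq_nonneg x]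
  exact pow_le_pow_iff_left₀ (by positivity) hy.le two_ne_zero |>.mp this

lemma inv_le_inv_add_of_sq_eq_sq_mul_one_sub {c : ℝ} (hc : 0 < c) (hx : 0 < x) (hy : 0 < y)
    (h : y ^ 2 = x ^ 2 * (1 - y)) (hcy : (c - 1) * x ≤ y) : y⁻¹ ≤ x⁻¹ + c⁻¹ := by
  have hfactor : (x + y) * (x * y - c * (x - y)) = x * y * (x + y - c * x) := by
    linear_combination c * h
  have hkey : 0 ≤ x * y - c * (x - y) := by
    refine nonneg_of_mul_nonneg_right ?_ (by linarith : 0 < x + y)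
    rw [hfactor]
    exact mul_nonneg (by positivity) (by linarith)
  have hdiff : x⁻¹ + c⁻¹ - y⁻¹ = (x * y - c * (x - y)) / (x * y * c) := by
    field_simp
    ring
  rw [← sub_nonneg, hdiff]
  exact div_nonneg hkey (by positivity)

end StepRelation

section Sequence

variable {θ : ℕ → ℝ}

lemma theta_pos (hθ : ∀ k, θ (k + 1) = thetaStep (θ k)) (h0 : 0 < θ 0) (k : ℕ) :
    0 < θ k := by
  induction k with
  | zero => exact h0
  | succ k ih => exact hθ k ▸ thetaStep_pos ih.ne'

lemma theta_succ_sq (hθ : ∀ k, θ (k + 1) = thetaStep (θ k)) (k : ℕ) :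
    θ (k + 1) ^ 2 = θ k ^ 2 * (1 - θ (k + 1)) :=
  hθ k ▸ thetaStep_sq (θ k)

lemma theta_antitone (hθ : ∀ k, θ (k + 1) = thetaStep (θ k)) (h0 : 0 < θ 0) : Antitone θ :=
  antitone_nat_of_succ_le fun k =>
    le_of_sq_eq_sq_mul_one_sub (theta_pos hθ h0 k).le (theta_pos hθ h0 (k + 1))
      (theta_succ_sq hθ k)

lemma one_sub_theta_zero_mul_le (hθ : ∀ k, θ (k + 1) = thetaStep (θ k)) (h0 : 0 < θ 0) (k : ℕ) :
    (1 - θ 0) * θ k ≤ θ (k + 1) := by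
  have hpos := theta_pos hθ h0
  calc (1 - θ 0) * θ k ≤ (1 - θ (k + 1)) * θ k := by
        gcongr
        · exact (hpos k).le
        · exact theta_antitone hθ h0 (Nat.zero_le _)
    _ ≤ θ (k + 1) :=
        one_sub_mul_le_of_sq_eq_sq_mul_one_sub (hpos k).le (hpos (k + 1)) (theta_succ_sq hθ k)

lemma inv_theta_le (hθ : ∀ k, θ (k + 1) = thetaStep (θ k)) (h0 : θ 0 ∈ Set.Ioo 0 2) (k : ℕ) :
    (θ k)⁻¹ ≤ (θ 0)⁻¹ + k * (2 - θ 0)⁻¹ := by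
  have hpos := theta_pos hθ h0.1
  induction k with
  | zero => simp
  | succ k ih =>
    have hstep := inv_le_inv_add_of_sq_eq_sq_mul_one_sub (sub_pos.2 h0.2) (hpos k)
      (hpos (k + 1)) (theta_succ_sq hθ k)
      (by convert one_sub_theta_zero_mul_le hθ h0.1 k using 1; ring)
    push_cast
    linarith

end Sequence

theorem theta_lower_bound (th : ℕ → ℝ)
    (h0 : th 0 ∈ Set.Ioc (0:ℝ) 1)
    (hrec : ∀ k, th (k+1) = (Real.sqrt ((th k)^4 + 4*(th k)^2) - (th k)^2)/2) :
    ∀ k : ℕ, (2 - th 0) / ((k : ℝ) + (2 - th 0) / th 0) ≤ th k := by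
  intro k
  obtain ⟨hpos, hle⟩ := h0
  have hc : 0 < 2 - th 0 := by linarith
  have hinv := inv_theta_le hrec ⟨hpos, by linarith⟩ k
  have hthk := theta_pos hrec hpos k
  calc (2 - th 0) / ((k : ℝ) + (2 - th 0) / th 0) = ((th 0)⁻¹ + k * (2 - th 0)⁻¹)⁻¹ := by
        field_simp
        ring
    _ ≤ th k := inv_le_of_inv_le₀ hthk hinv
end

section
/- Let F : ℝⁿ → ℝ ∪ {+∞} be a proper convex function with nonempty optimal set X* and optimal value F*. Suppose there exist μ > 0, a positive weight vector v, and r > 0 such that F(x) ≥ F* + (μ/2)·dist_v(x, X*)² for all x with F(x) − F* ≤ r. Then for every M ≥ 1 and every y with r ≤ F(y) − F* ≤ Mr, one has F(y) ≥ F* + (μ/(2M))·dist_v(y, X*)². -/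
/-!
Let `c = F y - F*` and `t = r / c ∈ (0, 1]`. For `p ∈ X*`, convexity gives
`F((1 - t) p + t y) - F* ≤ t c = r`, so the local bound puts that point within `√(2r/μ)` of `X*`.
Choosing `p` almost nearest to `y`, the distance of `y` to `X*` shrinks by at most the factor `t`
along the segment, so `t · dist(y, X*) ≤ √(2r/μ)`, i.e. `μ/2 · r · dist(y, X*)² ≤ c²`; with
`c ≤ M r` this is the claim. The weighted norm is handled by the isometric rescaling `x ↦ (√vᵢ xᵢ)ᵢ`.
-/

/-- Weighted distance of `x` to the set `S`, with respect to the weighted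
Euclidean norm `‖x‖_v² = ∑ i, v i * (x i)²`. -/
noncomputable def wdist (n : ℕ) (v x : Fin n → ℝ) (S : Set (Fin n → ℝ)) : ℝ :=
  sInf ((fun p => Real.sqrt (∑ i, v i * (x i - p i)^2)) '' S)

open Metric Set

section
variable {W : Type*} [NormedAddCommGroup W] [NormedSpace ℝ W]

lemma exists_mem_mul_infDist_le_infDist_smul_add_smul {T : Set W} (hT : T.Nonempty) (z : W)
    {t : ℝ} (ht₀ : 0 ≤ t) (ht₁ : t ≤ 1) {ε : ℝ} (hε : 0 < ε) :
    ∃ q ∈ T, t * infDist z T ≤ infDist ((1 - t) • q + t • z) T + ε := by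
  obtain ⟨q, hq, hzq⟩ := (infDist_lt_iff hT).1 (lt_add_of_pos_right (infDist z T) hε)
  refine ⟨q, hq, ?_⟩
  have hdist : dist z ((1 - t) • q + t • z) = (1 - t) * dist z q := by
    rw [dist_eq_norm, dist_eq_norm, show z - ((1 - t) • q + t • z) = (1 - t) • (z - q) by module,
      norm_smul, Real.norm_of_nonneg (sub_nonneg.2 ht₁)]
  have htri := infDist_le_infDist_add_dist (x := z) (y := (1 - t) • q + t • z) (s := T)
  nlinarith [mul_le_mul_of_nonneg_left hzq.le (sub_nonneg.2 ht₁)]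

variable {E : Type*} [AddCommGroup E] [Module ℝ E]

theorem ConvexOn.mul_sq_infDist_le_sq_of_errorBound {F : E → ℝ} (hF : ConvexOn ℝ univ F)
    (L : E →ₗ[ℝ] W) {S : Set E} (hS : S.Nonempty) {Fstar μ r : ℝ}
    (hSopt : ∀ x ∈ S, F x = Fstar) (hμ : 0 < μ) (hr : 0 < r)
    (heb : ∀ x, F x - Fstar ≤ r → Fstar + μ / 2 * infDist (L x) (L '' S) ^ 2 ≤ F x)
    {y : E} (hy : r ≤ F y - Fstar) :
    μ / 2 * r * infDist (L y) (L '' S) ^ 2 ≤ (F y - Fstar) ^ 2 := by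
  set c := F y - Fstar
  set d := infDist (L y) (L '' S)
  have hc : 0 < c := hr.trans_le hy
  set t := r / c
  have ht₀ : 0 ≤ t := by positivity
  have ht₁ : t ≤ 1 := (div_le_one hc).2 hy
  have htd : t * d ≤ Real.sqrt (2 * r / μ) := by
    refine le_of_forall_pos_le_add fun ε hε => ?_
    obtain ⟨_, ⟨p, hp, rfl⟩, hshrink⟩ :=
      exists_mem_mul_infDist_le_infDist_smul_add_smul (hS.image L) (L y) ht₀ ht₁ hε
    set x := (1 - t) • p + t • y
    have hLx : L x = (1 - t) • L p + t • L y := by simp [x]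
    have hFx : F x - Fstar ≤ r := by
      have hseg := hF.2 (mem_univ p) (mem_univ y) (sub_nonneg.2 ht₁) ht₀ (sub_add_cancel 1 t)
      simp only [smul_eq_mul, hSopt p hp] at hseg
      have htc : t * c = r := div_mul_cancel₀ r hc.ne'
      nlinarith
    have hdx : infDist (L x) (L '' S) ≤ Real.sqrt (2 * r / μ) := by
      refine Real.le_sqrt_of_sq_le ?_
      rw [le_div_iff₀ hμ]
      nlinarith [heb x hFx]
    rw [← hLx] at hshrink
    linarith
  have hsq : (t * d) ^ 2 ≤ 2 * r / μ := Real.sq_sqrt (by positivity : 0 ≤ 2 * r / μ) ▸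
    pow_le_pow_left₀ (mul_nonneg ht₀ infDist_nonneg) htd 2
  rw [mul_pow, div_pow, div_mul_eq_mul_div, div_le_div_iff₀ (by positivity) hμ] at hsq
  nlinarith

end

noncomputable def weightedEmbedding {n : ℕ} (v : Fin n → ℝ) :
    (Fin n → ℝ) →ₗ[ℝ] EuclideanSpace ℝ (Fin n) where
  toFun x := WithLp.toLp 2 fun i => √(v i) * x i
  map_add' x y := by ext i; simp [mul_add]
  map_smul' c x := by ext i; simp; ring

lemma dist_weightedEmbedding {n : ℕ} {v : Fin n → ℝ} (hv : 0 ≤ v) (x p : Fin n → ℝ) :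
    dist (weightedEmbedding v x) (weightedEmbedding v p) = √(∑ i, v i * (x i - p i) ^ 2) := by
  rw [EuclideanSpace.dist_eq]
  congr 1
  refine Finset.sum_congr rfl fun i _ => ?_
  simp [weightedEmbedding, Real.dist_eq, sq_abs, ← mul_sub, mul_pow, Real.sq_sqrt (hv i)]

lemma wdist_eq_infDist {n : ℕ} {v : Fin n → ℝ} (hv : 0 ≤ v) (x : Fin n → ℝ)
    (S : Set (Fin n → ℝ)) :
    wdist n v x S = infDist (weightedEmbedding v x) (weightedEmbedding v '' S) := by
  rw [infDist_eq_iInf, ← sInf_image', image_image, wdist]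
  simp only [dist_weightedEmbedding hv]

theorem local_error_bound_extends_general (n : ℕ) (F : (Fin n → ℝ) → ℝ)
    (Xs : Set (Fin n → ℝ)) (Fstar : ℝ)
    (hconv : ConvexOn ℝ Set.univ F)
    (hXs : Xs.Nonempty)
    (hXopt : ∀ x ∈ Xs, F x = Fstar)
    (μ r : ℝ) (hμ : 0 < μ) (hr : 0 < r)
    (v : Fin n → ℝ) (hv : ∀ i, 0 < v i)
    (heb : ∀ x, F x - Fstar ≤ r → Fstar + μ/2 * (wdist n v x Xs)^2 ≤ F x)
    (M : ℝ) (hM : 1 ≤ M)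
    (y : Fin n → ℝ) (hy1 : r ≤ F y - Fstar) (hy2 : F y - Fstar ≤ M * r) :
    Fstar + μ/(2*M) * (wdist n v y Xs)^2 ≤ F y := by
  have hv₀ : 0 ≤ v := fun i => (hv i).le
  simp only [wdist_eq_infDist hv₀] at heb ⊢
  have hquad :=
    hconv.mul_sq_infDist_le_sq_of_errorBound (weightedEmbedding v) hXs hXopt hμ hr heb hy1
  set d := infDist (weightedEmbedding v y) (weightedEmbedding v '' Xs)
  have hM₀ : 0 < M := one_pos.trans_le hM
  have hlin : μ / 2 * d ^ 2 ≤ M * (F y - Fstar) := by nlinarith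
  rw [div_mul_eq_div_div, div_mul_eq_mul_div]
  linarith [(div_le_iff₀' hM₀).2 hlin]

theorem local_error_bound_extends (n : ℕ) (F : (Fin n → ℝ) → ℝ)
    (Xs : Set (Fin n → ℝ)) (Fstar : ℝ)
    (hconv : ConvexOn ℝ Set.univ F)
    (hXs : Xs.Nonempty)
    (hXopt : ∀ x ∈ Xs, F x = Fstar)
    (hFstar : ∀ x, Fstar ≤ F x)
    (μ r : ℝ) (hμ : 0 < μ) (hr : 0 < r)
    (v : Fin n → ℝ) (hv : ∀ i, 0 < v i)
    (heb : ∀ x, F x - Fstar ≤ r → Fstar + μ/2 * (wdist n v x Xs)^2 ≤ F x)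
    (M : ℝ) (hM : 1 ≤ M)
    (y : Fin n → ℝ) (hy1 : r ≤ F y - Fstar) (hy2 : F y - Fstar ≤ M * r) :
    Fstar + μ/(2*M) * (wdist n v y Xs)^2 ≤ F y :=
  local_error_bound_extends_general n F Xs Fstar hconv hXs hXopt μ r hμ hr v hv heb M hM y hy1 hy2
end

section
/- Fix K₀ ∈ ℕ \ {0}, K* ∈ ℕ, and let (K_r) satisfy the variable restart schedule assumption: K_{2^j − 1} = 2^j K₀ for all j, and |{0 ≤ r < 2^J − 1 : K_r = 2^j K₀}| = 2^{J−1−j} for all j < J. Let i = ⌈max(log₂(K*/K₀), 0)⌉. Then the number of indices r ≤ 2^J − 1 with K_r ≥ 2^i K₀ is exactly 2^{J−i} (counting the final index r = 2^J − 1). -/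
/-! Among the first `2^J - 1` restarts, the levels `j ∈ [i, J)` (periods `2^j K₀ ≥ 2^i K₀`)
contribute `∑ 2^(J-1-j) = 2^(J-i) - 1` long periods and the levels `j < i` contribute the rest of
`∑_{j<J} 2^(J-1-j) = 2^J - 1` short ones. Since the two lower bounds already add up to the total,
both are exact; the final restart `K (2^J - 1) = 2^J K₀` is long and adds one more. -/

open Finset

lemma sum_Ico_two_pow_sub_eq (a J : ℕ) (h : a ≤ J) :
    ∑ j ∈ Ico a J, 2 ^ (J - 1 - j) = 2 ^ (J - a) - 1 := by
  calc ∑ j ∈ Ico a J, 2 ^ (J - 1 - j) = ∑ k ∈ range (J - a), 2 ^ k := by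
        rw [sum_Ico_eq_sum_range, ← sum_range_reflect]
        refine sum_congr rfl fun k hk => ?_
        rw [mem_range] at hk
        congr 1
        omega
    _ = 2 ^ (J - a) - 1 := by simp [Nat.geomSum_eq le_rfl]

lemma sum_card_filter_eq_le_card_filter {α β ι : Type*} [DecidableEq β] (s : Finset α)
    (K : α → β) (T : Finset ι) (g : ι → β) (hg : Set.InjOn g T)
    (p : β → Prop) [DecidablePred p] (hp : ∀ j ∈ T, p (g j)) :
    ∑ j ∈ T, #{r ∈ s | K r = g j} ≤ #{r ∈ s | p (K r)} := by
  rw [← sum_image (f := fun b => #{r ∈ s | K r = b}) hg, sum_card_fiberwise_eq_card_filter]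
  refine card_le_card (monotone_filter_right s fun r _ hr => ?_)
  obtain ⟨j, hj, hjr⟩ := mem_image.mp hr
  exact hjr ▸ hp j hj

lemma card_filter_two_pow_mul_le_of_card_levels (K0 : ℕ) (hK0 : 1 ≤ K0) (K : ℕ → ℕ)
    (i J : ℕ) (hiJ : i ≤ J)
    (hlevels : ∀ j < J, #{r ∈ range (2 ^ J - 1) | K r = 2 ^ j * K0} = 2 ^ (J - 1 - j)) :
    #{r ∈ range (2 ^ J - 1) | 2 ^ i * K0 ≤ K r} = 2 ^ (J - i) - 1 := by
  have hinj : Set.InjOn (fun j => 2 ^ j * K0) Set.univ := fun a _ b _ hab =>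
    Nat.pow_right_injective le_rfl (Nat.eq_of_mul_eq_mul_right hK0 hab)
  have hlong := sum_card_filter_eq_le_card_filter (range (2 ^ J - 1)) K (Ico i J) _
    (hinj.mono (by simp)) (fun k => 2 ^ i * K0 ≤ k) fun j hj =>
      Nat.mul_le_mul_right K0 (Nat.pow_le_pow_right two_pos (mem_Ico.mp hj).1)
  have hshort := sum_card_filter_eq_le_card_filter (range (2 ^ J - 1)) K (range i) _
    (hinj.mono (by simp)) (fun k => ¬ 2 ^ i * K0 ≤ k) fun j hj => not_le.mpr <|
      Nat.mul_lt_mul_of_pos_right (Nat.pow_lt_pow_right one_lt_two (mem_range.mp hj)) hK0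
  rw [sum_congr rfl fun j hj => hlevels j (mem_Ico.mp hj).2,
    sum_Ico_two_pow_sub_eq i J hiJ] at hlong
  rw [sum_congr rfl fun j hj => hlevels j ((mem_range.mp hj).trans_le hiJ)] at hshort
  have htotal := card_filter_add_card_filter_not (s := range (2 ^ J - 1)) (2 ^ i * K0 ≤ K ·)
  have hsplit := sum_range_add_sum_Ico (fun j => 2 ^ (J - 1 - j)) hiJ
  rw [← Nat.Ico_zero_eq_range (a := J), sum_Ico_two_pow_sub_eq 0 J J.zero_le,
    sum_Ico_two_pow_sub_eq i J hiJ] at hsplit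
  rw [Nat.sub_zero] at hsplit
  rw [card_range] at htotal
  omega

theorem variable_restart_count_long_periods_general (K0 : ℕ)
    (hK0 : 1 ≤ K0) (K : ℕ → ℕ)
    (h1 : ∀ j : ℕ, K (2^j - 1) = 2^j * K0)
    (h2 : ∀ J : ℕ, ∀ j < J,
      ((Finset.range (2^J - 1)).filter (fun r => K r = 2^j * K0)).card = 2^(J-1-j))
    (i : ℕ)
    (J : ℕ) (hiJ : i ≤ J) :
    ((Finset.range (2^J)).filter (fun r => 2^i * K0 ≤ K r)).card = 2^(J-i) := by
  have hlast : 2 ^ i * K0 ≤ K (2 ^ J - 1) := by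
    rw [h1 J]
    exact Nat.mul_le_mul_right K0 (Nat.pow_le_pow_right two_pos hiJ)
  rw [← Nat.sub_add_cancel (Nat.one_le_two_pow (n := J)), range_add_one, filter_insert,
    if_pos hlast, card_insert_of_notMem (by simp),
    card_filter_two_pow_mul_le_of_card_levels K0 hK0 K i J hiJ (h2 J)]
  exact Nat.sub_add_cancel Nat.one_le_two_pow

theorem variable_restart_count_long_periods (K0 Kstar : ℕ)
    (hK0 : 1 ≤ K0) (hKstar : 1 ≤ Kstar) (K : ℕ → ℕ)
    (h1 : ∀ j : ℕ, K (2^j - 1) = 2^j * K0)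
    (h2 : ∀ J : ℕ, ∀ j < J,
      ((Finset.range (2^J - 1)).filter (fun r => K r = 2^j * K0)).card = 2^(J-1-j))
    (i : ℕ) (hi : i = ⌈max (Real.logb 2 ((Kstar : ℝ) / (K0 : ℝ))) 0⌉₊)
    (J : ℕ) (hiJ : i ≤ J) :
    ((Finset.range (2^J)).filter (fun r => 2^i * K0 ≤ K r)).card = 2^(J-i) :=
  variable_restart_count_long_periods_general K0 hK0 K h1 h2 i J hiJ
end

section
/- Let θ₀ ∈ (0,1] and let (θ_k) be the APPROX momentum sequence (θ_{k+1}² = θ_k²(1 − θ_{k+1})). Then the rate factor ρ_K = (1 + (1−θ₀)μ)/(1 + θ₀²μ/(2θ_{K−1}²)) is strictly less than 1 whenever 2θ_{K−1}² < θ₀²/(1 − θ₀); in particular this holds for all K ≥ 1/θ₀. -/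
/-!
The momentum update `θ ↦ θ'` is the positive root of `θ'² = θ²(1 - θ')`, and from this
`1/θ' ≥ 1/θ + 1/2`, so `θ_k ≤ 2/(k + 2/θ₀)`. The rate factor is below `1` exactly when
`2θ_{K-1}²(1 - θ₀) < θ₀²`; for `K ≥ 1/θ₀` the bound gives `θ_{K-1} ≤ 2θ₀/(3 - θ₀)`,
and then `8(1 - θ₀) < (3 - θ₀)²` because the difference is `(1 + θ₀)²`.
-/

open Real

noncomputable def approxMomentumStep (a : ℝ) : ℝ := (√(a ^ 4 + 4 * a ^ 2) - a ^ 2) / 2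

lemma approxMomentumStep_pos {a : ℝ} (ha : 0 < a) : 0 < approxMomentumStep a := by
  have hs : √(a ^ 4 + 4 * a ^ 2) ^ 2 = a ^ 4 + 4 * a ^ 2 := sq_sqrt (by positivity)
  have : a ^ 2 < √(a ^ 4 + 4 * a ^ 2) := by
    nlinarith [sqrt_nonneg (a ^ 4 + 4 * a ^ 2)]
  unfold approxMomentumStep
  linarith

lemma approxMomentumStep_sq (a : ℝ) :
    approxMomentumStep a ^ 2 = a ^ 2 * (1 - approxMomentumStep a) := by
  have hs : √(a ^ 4 + 4 * a ^ 2) ^ 2 = a ^ 4 + 4 * a ^ 2 := sq_sqrt (by positivity)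
  unfold approxMomentumStep
  linear_combination hs / 4

lemma inv_add_half_le_inv_approxMomentumStep {a : ℝ} (ha : 0 < a) :
    a⁻¹ + 1 / 2 ≤ (approxMomentumStep a)⁻¹ := by
  have hb := approxMomentumStep_pos ha
  have hsq := approxMomentumStep_sq a
  rw [inv_eq_one_div, inv_eq_one_div, div_add_div _ _ ha.ne' two_ne_zero,
    div_le_div_iff₀ (by positivity) hb]
  nlinarith [mul_pos ha hb]

section ApproxMomentumSequence

variable {th : ℕ → ℝ}

lemma approxMomentum_pos
    (hrec : ∀ k, th (k + 1) = approxMomentumStep (th k)) (h0 : 0 < th 0) (k : ℕ) :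
    0 < th k := by
  induction k with
  | zero => exact h0
  | succ k ih => exact hrec k ▸ approxMomentumStep_pos ih

lemma inv_add_div_two_le_inv_approxMomentum
    (hrec : ∀ k, th (k + 1) = approxMomentumStep (th k)) (h0 : 0 < th 0) (k : ℕ) :
    (th 0)⁻¹ + k / 2 ≤ (th k)⁻¹ := by
  induction k with
  | zero => simp
  | succ k ih =>
    have := inv_add_half_le_inv_approxMomentumStep (approxMomentum_pos hrec h0 k)
    rw [hrec k]
    push_cast
    linarith

lemma approxMomentum_le
    (hrec : ∀ k, th (k + 1) = approxMomentumStep (th k)) (h0 : 0 < th 0) (k : ℕ) :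
    th k ≤ 2 / (k + 2 / th 0) := by
  have hk := approxMomentum_pos hrec h0 k
  have := inv_add_div_two_le_inv_approxMomentum hrec h0 k
  rw [le_div_iff₀ (by positivity)]
  calc th k * (k + 2 / th 0) = 2 * (th k * ((th 0)⁻¹ + k / 2)) := by ring
    _ ≤ 2 * (th k * (th k)⁻¹) := by gcongr
    _ = 2 := by rw [mul_inv_cancel₀ hk.ne', mul_one]

end ApproxMomentumSequence

lemma rate_factor_lt_one {t0 μ θ : ℝ} (hμ : 0 < μ) (hθ : 0 < θ)
    (h : 2 * θ ^ 2 * (1 - t0) < t0 ^ 2) :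
    (1 + (1 - t0) * μ) / (1 + t0 ^ 2 * μ / (2 * θ ^ 2)) < 1 := by
  have : (1 - t0) * μ < t0 ^ 2 * μ / (2 * θ ^ 2) := by
    rw [lt_div_iff₀ (by positivity)]
    nlinarith
  rw [div_lt_one (by positivity)]
  linarith

lemma mul_one_sub_lt_sq_of_lt_div {t0 x : ℝ} (ht0 : t0 ≠ 0) (hx : 0 ≤ x)
    (h : x < t0 ^ 2 / (1 - t0)) : x * (1 - t0) < t0 ^ 2 := by
  rcases lt_trichotomy (1 - t0) 0 with hneg | hzero | hpos
  · linarith [div_neg_of_pos_of_neg (by positivity : 0 < t0 ^ 2) hneg]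
  · rw [hzero, mul_zero]
    positivity
  · rwa [lt_div_iff₀ hpos] at h

lemma two_mul_sq_mul_one_sub_lt_sq {t0 θ : ℝ} (ht0 : 0 < t0) (ht1 : t0 ≤ 1) (hθ : 0 ≤ θ)
    (hle : θ ≤ 2 * t0 / (3 - t0)) : 2 * θ ^ 2 * (1 - t0) < t0 ^ 2 := by
  rw [le_div_iff₀ (by linarith)] at hle
  nlinarith [mul_pos ht0 ht0, mul_nonneg hθ (sub_nonneg.2 ht1)]

theorem rate_strict_contraction_general (t0 μ : ℝ)
    (ht0 : t0 ∈ Set.Ioc (0:ℝ) 1) (hμ : 0 < μ)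
    (th : ℕ → ℝ) (h0 : th 0 = t0)
    (hrec : ∀ k, th (k+1) = (Real.sqrt ((th k)^4 + 4*(th k)^2) - (th k)^2)/2)
    (K : ℕ) :
    (2 * (th (K-1))^2 < t0^2 / (1 - t0) →
      (1 + (1 - t0)*μ) / (1 + t0^2*μ/(2*(th (K-1))^2)) < 1) ∧
    (1/t0 ≤ (K : ℝ) →
      (1 + (1 - t0)*μ) / (1 + t0^2*μ/(2*(th (K-1))^2)) < 1) := by
  obtain ⟨ht0, ht1⟩ := ht0
  have hth0 : 0 < th 0 := h0 ▸ ht0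
  have hpos := approxMomentum_pos hrec hth0 (K - 1)
  refine ⟨fun h ↦ rate_factor_lt_one hμ hpos
    (mul_one_sub_lt_sq_of_lt_div ht0.ne' (by positivity) h), fun hK ↦ ?_⟩
  refine rate_factor_lt_one hμ hpos (two_mul_sq_mul_one_sub_lt_sq ht0 ht1 hpos.le ?_)
  have hKpred : (K : ℝ) ≤ ((K - 1 : ℕ) : ℝ) + 1 := by
    exact_mod_cast (by omega : K ≤ K - 1 + 1)
  have h3 : 0 < 3 / t0 - 1 := by
    rw [sub_pos, lt_div_iff₀ ht0]
    linarith
  calc th (K - 1) ≤ 2 / ((K - 1 : ℕ) + 2 / t0) := h0 ▸ approxMomentum_le hrec hth0 _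
    _ ≤ 2 / (3 / t0 - 1) := by
      gcongr
      have : 1 / t0 + 2 / t0 = 3 / t0 := by ring
      linarith
    _ = 2 * t0 / (3 - t0) := by field_simp

theorem rate_strict_contraction (t0 μ : ℝ)
    (ht0 : t0 ∈ Set.Ioc (0:ℝ) 1) (hμ : 0 < μ)
    (th : ℕ → ℝ) (h0 : th 0 = t0)
    (hrec : ∀ k, th (k+1) = (Real.sqrt ((th k)^4 + 4*(th k)^2) - (th k)^2)/2)
    (K : ℕ) (hK : 1 ≤ K) :
    (2 * (th (K-1))^2 < t0^2 / (1 - t0) →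
      (1 + (1 - t0)*μ) / (1 + t0^2*μ/(2*(th (K-1))^2)) < 1) ∧
    (1/t0 ≤ (K : ℝ) →
      (1 + (1 - t0)*μ) / (1 + t0^2*μ/(2*(th (K-1))^2)) < 1) :=
  rate_strict_contraction_general t0 μ ht0 hμ th h0 hrec K
end

section
/- Let θ₀ ∈ (0,1), μ > 0, and θ_K ≤ θ_{K−1} ≤ θ₀ with all θ's in (0,1). Then (1−θ_K)·(1 + (θ₀μ/θ_K)(1−θ₀))·(1 + θ₀²μ/(2θ_K²)) + θ_K·(1 + θ₀²μ/(2θ_K²))·(1 + θ₀²μ/(2θ_{K−1}²)) ≤ (1 + θ₀²μ/(2θ_{K−1}²))·(1 + θ₀μ/θ_K), provided θ_{K−1}² = θ_K²/(1−θ_K). -/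
/-! Substituting `θ_{K-1}² = θ_K² / (1 - θ_K)` eliminates `θ_{K-1}`, and the right-hand side minus
the left-hand side becomes the polynomial `θ₀(2 - θ₀)/2 · μ + (1 - θ_K) θ₀⁴ / (4 θ_K³) · μ²` in `μ`,
whose coefficients are nonnegative for `θ₀ ≤ 2` and `θ_K ≤ 1`. -/

section RateGap

variable {t0 μ t : ℝ}

theorem rate_gap_eq (ht : t ≠ 0) (ht1 : t ≠ 1) :
    (1 + t0^2*μ/(2*(t^2/(1-t)))) * (1 + t0*μ/t) =
      (1 - t) * (1 + (t0*μ/t) * (1 - t0)) * (1 + t0^2*μ/(2*t^2))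
        + t * (1 + t0^2*μ/(2*t^2)) * (1 + t0^2*μ/(2*(t^2/(1-t))))
        + (t0*(2 - t0)/2 * μ + (1 - t)*t0^4/(4*t^3) * μ^2) := by
  have h1t : 1 - t ≠ 0 := sub_ne_zero.mpr (Ne.symm ht1)
  field_simp
  ring

theorem rate_gap_nonneg (ht0 : 0 ≤ t0) (ht02 : t0 ≤ 2) (hμ : 0 ≤ μ) (ht : 0 < t) (ht1 : t ≤ 1) :
    0 ≤ t0*(2 - t0)/2 * μ + (1 - t)*t0^4/(4*t^3) * μ^2 := by
  have h2t0 : 0 ≤ 2 - t0 := sub_nonneg.mpr ht02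
  have h1t : 0 ≤ 1 - t := sub_nonneg.mpr ht1
  positivity

end RateGap

theorem rate_inductive_step_general (t0 μ tK tKm1 : ℝ)
    (ht0 : t0 ∈ Set.Ioo (0:ℝ) 1) (hμ : 0 < μ)
    (htK : tK ∈ Set.Ioo (0:ℝ) 1)
    (hrel : tKm1^2 = tK^2 / (1 - tK)) :
    (1 - tK) * (1 + (t0*μ/tK) * (1 - t0)) * (1 + t0^2*μ/(2*tK^2))
      + tK * (1 + t0^2*μ/(2*tK^2)) * (1 + t0^2*μ/(2*tKm1^2))
      ≤ (1 + t0^2*μ/(2*tKm1^2)) * (1 + t0*μ/tK) := by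
  obtain ⟨ht0_pos, ht0_lt⟩ := ht0
  obtain ⟨htK_pos, htK_lt⟩ := htK
  rw [hrel, rate_gap_eq htK_pos.ne' htK_lt.ne]
  exact le_add_of_nonneg_right
    (rate_gap_nonneg ht0_pos.le (by linarith) hμ.le htK_pos htK_lt.le)

theorem rate_inductive_step (t0 μ tK tKm1 : ℝ)
    (ht0 : t0 ∈ Set.Ioo (0:ℝ) 1) (hμ : 0 < μ)
    (htK : tK ∈ Set.Ioo (0:ℝ) 1) (htKm1 : tKm1 ∈ Set.Ioo (0:ℝ) 1)
    (hle : tK ≤ tKm1) (hle0 : tKm1 ≤ t0)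
    (hrel : tKm1^2 = tK^2 / (1 - tK)) :
    (1 - tK) * (1 + (t0*μ/tK) * (1 - t0)) * (1 + t0^2*μ/(2*tK^2))
      + tK * (1 + t0^2*μ/(2*tK^2)) * (1 + t0^2*μ/(2*tKm1^2))
      ≤ (1 + t0^2*μ/(2*tKm1^2)) * (1 + t0*μ/tK) :=
  rate_inductive_step_general t0 μ tK tKm1 ht0 hμ htK hrel
end
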